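/- arXiv:2505.14641 — 6 statements merged into one kernel-verified Lean document; each statement's English description precedes it below -/
import Mathlib

section
/- Let d ≥ 2 and q ≥ 3 be natural numbers, and let U be a subset of the vertices of the Hamming graph H(d,q) with |U| ≥ 2q^(d−1) + 1. Then the VC-dimension of (U, n(U)) is at least 2. -/
/-- Two vertices of the Hamming graph `H(d,q,t)` (vertex set `(ZMod q)^d`) are adjacent
if and only if they differ in exactly `t` coordinates. -/
def hammingAdj {d q : ℕ} (t : ℕ) (x y : Fin d → ZMod q) : Prop :=
  (Finset.univ.filter fun i => x i ≠ y i).card = t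

/-- `W ⊆ U` is shattered by the neighborhoods `n(U)`: for every `S ⊆ W` there is a
vertex `u ∈ U` with `n(u) ∩ W = S`. -/
def Shatters {d q : ℕ} (t : ℕ) (U W : Finset (Fin d → ZMod q)) : Prop :=
  ∀ S ⊆ W, ∃ u ∈ U, ∀ w ∈ W, (w ∈ S ↔ hammingAdj t u w)

/-!
Lines in direction `0` are the fibres of `Fin.tail`. One of them carries three points `a, b, c`
of `U`, since there are only `q^(d-1)` such lines and `|U| > 2 q^(d-1)`. Any two of these points
are adjacent and the third is a common neighbour, so a pair among them is shattered as soon as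
some `u ∈ U` is adjacent to neither. Since `|U| > q`, some `u ∈ U` lies off the line, and a vertex
off a line is adjacent to at most one of its points; so `u` misses two of `a, b, c`.
-/

open Finset

section Hamming

variable {n : ℕ} {α : Type*}

theorem card_le_of_forall_tail_eq [Fintype α] {s : Finset (Fin (n + 1) → α)}
    {ℓ : Fin n → α} (h : ∀ x ∈ s, Fin.tail x = ℓ) : #s ≤ Fintype.card α := by
  refine card_le_card_of_injOn (· 0) (fun _ _ => mem_coe.2 (mem_univ _)) fun x hx y hy hxy => ?_
  rw [← Fin.cons_self_tail x, ← Fin.cons_self_tail y, h x hx, h y hy, show x 0 = y 0 from hxy]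

variable [DecidableEq α]

theorem hammingDist_eq_ite_add_hammingDist_tail (x y : Fin (n + 1) → α) :
    hammingDist x y = (if x 0 ≠ y 0 then 1 else 0) + hammingDist (Fin.tail x) (Fin.tail y) := by
  rw [hammingDist, hammingDist, card_filter, card_filter, Fin.sum_univ_succ]
  rfl

theorem hammingDist_eq_one_of_tail_eq {x y : Fin (n + 1) → α} (hxy : x ≠ y)
    (h : Fin.tail x = Fin.tail y) : hammingDist x y = 1 := by
  have h0 : x 0 ≠ y 0 := fun h0 => hxy <| by
    rw [← Fin.cons_self_tail x, ← Fin.cons_self_tail y, h0, h]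
  simp [hammingDist_eq_ite_add_hammingDist_tail, h0, h]

theorem head_eq_of_hammingDist_eq_one {x y : Fin (n + 1) → α} (hxy : hammingDist x y = 1)
    (h : Fin.tail x ≠ Fin.tail y) : x 0 = y 0 := by
  by_contra h0
  have := hammingDist_pos.2 h
  rw [hammingDist_eq_ite_add_hammingDist_tail, if_pos h0] at hxy
  omega

theorem tail_eq_of_hammingDist_eq_one {a b u : Fin (n + 1) → α} (hab : a ≠ b)
    (h : Fin.tail a = Fin.tail b) (hua : hammingDist u a = 1) (hub : hammingDist u b = 1) :
    Fin.tail u = Fin.tail a := by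
  by_contra hu
  have hua0 := head_eq_of_hammingDist_eq_one hua hu
  have hub0 := head_eq_of_hammingDist_eq_one hub (h ▸ hu)
  exact hab (by rw [← Fin.cons_self_tail a, ← Fin.cons_self_tail b, ← hua0, ← hub0, h])

theorem exists_two_lt_card_filter_tail_eq [Fintype α] {s : Finset (Fin (n + 1) → α)}
    (h : 2 * Fintype.card α ^ n < #s) :
    ∃ ℓ : Fin n → α, 2 < #(s.filter (Fin.tail · = ℓ)) := by
  obtain ⟨ℓ, -, hℓ⟩ := exists_lt_card_fiber_of_mul_lt_card_of_maps_to
    (s := s) (t := univ) (f := Fin.tail) (n := 2) (fun _ _ => mem_univ _)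
    (by rwa [card_univ, Fintype.card_fun, Fintype.card_fin, mul_comm])
  exact ⟨ℓ, hℓ⟩

end Hamming

section Shatters

variable {d q : ℕ}

theorem hammingAdj_iff {t : ℕ} {x y : Fin d → ZMod q} :
    hammingAdj t x y ↔ hammingDist x y = t :=
  Iff.rfl

theorem shatters_pair {t : ℕ} {U : Finset (Fin d → ZMod q)} {a b : Fin d → ZMod q}
    (h₁₁ : ∃ u ∈ U, hammingAdj t u a ∧ hammingAdj t u b)
    (h₁₀ : ∃ u ∈ U, hammingAdj t u a ∧ ¬ hammingAdj t u b)
    (h₀₁ : ∃ u ∈ U, ¬ hammingAdj t u a ∧ hammingAdj t u b)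
    (h₀₀ : ∃ u ∈ U, ¬ hammingAdj t u a ∧ ¬ hammingAdj t u b) :
    Shatters t U {a, b} := by
  intro S _
  have witness :
      ∃ u ∈ U, (a ∈ S ↔ hammingAdj t u a) ∧ (b ∈ S ↔ hammingAdj t u b) := by
    by_cases ha : a ∈ S <;> by_cases hb : b ∈ S <;> simp only [ha, hb, true_iff, false_iff]
    exacts [h₁₁, h₁₀, h₀₁, h₀₀]
  obtain ⟨u, hu, hua, hub⟩ := witness
  refine ⟨u, hu, fun w hw => ?_⟩
  rcases mem_insert.1 hw with rfl | hw
  · exact hua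
  · rwa [mem_singleton.1 hw]

variable {n : ℕ} {U : Finset (Fin (n + 1) → ZMod q)} {ℓ : Fin n → ZMod q}

theorem shatters_pair_of_tail_eq {a b c u : Fin (n + 1) → ZMod q}
    (ha : a ∈ U) (hb : b ∈ U) (hc : c ∈ U) (hu : u ∈ U)
    (hab : a ≠ b) (hac : a ≠ c) (hbc : b ≠ c)
    (hℓa : Fin.tail a = ℓ) (hℓb : Fin.tail b = ℓ) (hℓc : Fin.tail c = ℓ)
    (hua : ¬ hammingAdj 1 u a) (hub : ¬ hammingAdj 1 u b) :
    Shatters 1 U {a, b} := by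
  have adj : ∀ {x y}, x ≠ y → Fin.tail x = ℓ → Fin.tail y = ℓ → hammingAdj 1 x y :=
    fun hxy hx hy => hammingAdj_iff.2 (hammingDist_eq_one_of_tail_eq hxy (hx.trans hy.symm))
  have irrefl : ∀ x : Fin (n + 1) → ZMod q, ¬ hammingAdj 1 x x := fun x => by
    simp [hammingAdj_iff]
  exact shatters_pair ⟨c, hc, adj hac.symm hℓc hℓa, adj hbc.symm hℓc hℓb⟩
    ⟨b, hb, adj hab.symm hℓb hℓa, irrefl b⟩ ⟨a, ha, irrefl a, adj hab hℓa hℓb⟩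
    ⟨u, hu, hua, hub⟩

theorem exists_shattered_pair_of_tail_eq {a b c u : Fin (n + 1) → ZMod q}
    (ha : a ∈ U) (hb : b ∈ U) (hc : c ∈ U) (hu : u ∈ U)
    (hab : a ≠ b) (hac : a ≠ c) (hbc : b ≠ c)
    (hℓa : Fin.tail a = ℓ) (hℓb : Fin.tail b = ℓ) (hℓc : Fin.tail c = ℓ)
    (hℓu : Fin.tail u ≠ ℓ) :
    ∃ W ⊆ U, #W = 2 ∧ Shatters 1 U W := by
  have pair_subset : ∀ {x y}, x ∈ U → y ∈ U → {x, y} ⊆ U := fun hx hy =>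
    insert_subset hx (singleton_subset_iff.2 hy)
  have not_adj_both : ∀ {x y}, x ≠ y → Fin.tail x = ℓ → Fin.tail y = ℓ →
      hammingAdj 1 u x → ¬ hammingAdj 1 u y := fun hxy hx hy hux huy =>
    hℓu ((tail_eq_of_hammingDist_eq_one hxy (hx.trans hy.symm)
      (hammingAdj_iff.1 hux) (hammingAdj_iff.1 huy)).trans hx)
  by_cases hua : hammingAdj 1 u a
  · exact ⟨{b, c}, pair_subset hb hc, card_pair hbc, shatters_pair_of_tail_eq hb hc ha hu hbc
      hab.symm hac.symm hℓb hℓc hℓa (not_adj_both hab hℓa hℓb hua)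
      (not_adj_both hac hℓa hℓc hua)⟩
  by_cases hub : hammingAdj 1 u b
  · exact ⟨{a, c}, pair_subset ha hc, card_pair hac, shatters_pair_of_tail_eq ha hc hb hu hac
      hab hbc.symm hℓa hℓc hℓb hua (not_adj_both hbc hℓb hℓc hub)⟩
  exact ⟨{a, b}, pair_subset ha hb, card_pair hab,
    shatters_pair_of_tail_eq ha hb hc hu hab hac hbc hℓa hℓb hℓc hua hub⟩

end Shatters

/-- if `d ≥ 2`, `q ≥ 3` and `U ⊆ V(H(d,q))` has `|U| ≥ 2q^(d-1)+1`,
then the VC-dimension of `(U, n(U))` is at least 2. -/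
theorem vc_dim_ge_two_of_card (d q : ℕ) (hd : 2 ≤ d) (hq : 3 ≤ q)
    (U : Finset (Fin d → ZMod q)) (hU : 2 * q ^ (d - 1) + 1 ≤ U.card) :
    ∃ W ⊆ U, W.card = 2 ∧ Shatters 1 U W := by
  obtain ⟨n, rfl⟩ : ∃ n, d = n + 1 := ⟨d - 1, by omega⟩
  rw [Nat.add_sub_cancel] at hU
  have : NeZero q := ⟨by omega⟩
  have hqn : q ≤ q ^ n := Nat.le_self_pow (by omega) q
  obtain ⟨ℓ, hℓ⟩ := exists_two_lt_card_filter_tail_eq (s := U) (by rw [ZMod.card]; omega)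
  obtain ⟨a, ha, b, hb, c, hc, hab, hac, hbc⟩ := two_lt_card.1 hℓ
  rw [mem_filter] at ha hb hc
  obtain ⟨u, hu, hℓu⟩ : ∃ u ∈ U, Fin.tail u ≠ ℓ := by
    by_contra! h
    have := card_le_of_forall_tail_eq h
    rw [ZMod.card] at this
    omega
  exact exists_shattered_pair_of_tail_eq ha.1 hb.1 hc.1 hu hab hac hbc ha.2 hb.2 hc.2 hℓu
end

section
/- Let q ≥ 3 be an odd natural number, and let U be a subset of the vertices of the Hamming graph H(2,q) with |U| ≥ 2q. Then the VC-dimension of (U, n(U)) is at least 2. -/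
/-!
Think of `U` as cells of a `q × q` board, adjacent when they share a row or a column. If a line
holds three points of `U`, a point off the line is adjacent to at most one of them, and then the
other two are shattered; so `U` lies on that line and `|U| ≤ q`. Hence every line holds at most
two points of `U`, and `|U| ≥ 2q` forces exactly two on every line. Now for two points `x, y` in a
row, the other points `x'`, `y'` in their columns must lie in a common row, since otherwise
`{x', y}` is shattered. So the columns pair the rows off perfectly, which is impossible for odd `q`.
-/

section Shattering

variable {d q : ℕ}

def NoShatteredPair (t : ℕ) (U : Finset (Fin d → ZMod q)) : Prop :=
  ∀ x ∈ U, ∀ y ∈ U, x ≠ y → ¬ Shatters t U {x, y}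

lemma shatters_pair_s1 {t : ℕ} {U : Finset (Fin d → ZMod q)} {x y : Fin d → ZMod q}
    (hboth : ∃ u ∈ U, hammingAdj t u x ∧ hammingAdj t u y)
    (hleft : ∃ u ∈ U, hammingAdj t u x ∧ ¬ hammingAdj t u y)
    (hright : ∃ u ∈ U, ¬ hammingAdj t u x ∧ hammingAdj t u y)
    (hnone : ∃ u ∈ U, ¬ hammingAdj t u x ∧ ¬ hammingAdj t u y) :
    Shatters t U {x, y} := by
  intro S _
  have realize : ∀ u ∈ U, (x ∈ S ↔ hammingAdj t u x) → (y ∈ S ↔ hammingAdj t u y) →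
      ∃ u ∈ U, ∀ w ∈ ({x, y} : Finset _), (w ∈ S ↔ hammingAdj t u w) := by
    intro u hu hx hy
    refine ⟨u, hu, ?_⟩
    simpa only [Finset.forall_mem_insert, Finset.mem_singleton, forall_eq] using ⟨hx, hy⟩
  by_cases hx : x ∈ S <;> by_cases hy : y ∈ S
  · obtain ⟨u, hu, h₁, h₂⟩ := hboth
    exact realize u hu (iff_of_true hx h₁) (iff_of_true hy h₂)
  · obtain ⟨u, hu, h₁, h₂⟩ := hleft
    exact realize u hu (iff_of_true hx h₁) (iff_of_false hy h₂)
  · obtain ⟨u, hu, h₁, h₂⟩ := hright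
    exact realize u hu (iff_of_false hx h₁) (iff_of_true hy h₂)
  · obtain ⟨u, hu, h₁, h₂⟩ := hnone
    exact realize u hu (iff_of_false hx h₁) (iff_of_false hy h₂)

end Shattering

namespace RookGraph

variable {α : Type*} {q : ℕ}

lemma eq_of_apply_eq_of_apply_eq {x y : Fin 2 → α} {i j : Fin 2} (hij : i ≠ j)
    (hi : x i = y i) (hj : x j = y j) : x = y := by
  funext k
  rcases (by omega : k = i ∨ k = j) with rfl | rfl
  exacts [hi, hj]

lemma hammingAdj_one_iff {u w : Fin 2 → ZMod q} :
    hammingAdj 1 u w ↔ u ≠ w ∧ ∃ i, u i = w i := by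
  have hne : u ≠ w ↔ u 0 ≠ w 0 ∨ u 1 ≠ w 1 := by
    refine ⟨fun h => ?_, fun h huw => by simp [huw] at h⟩
    by_contra! h'
    exact h (eq_of_apply_eq_of_apply_eq (by decide) h'.1 h'.2)
  rw [hne, hammingAdj, show (Finset.univ : Finset (Fin 2)) = {0, 1} from rfl, Fin.exists_fin_two]
  by_cases h0 : u 0 = w 0 <;> by_cases h1 : u 1 = w 1 <;>
    simp [Finset.filter_insert, Finset.filter_singleton, h0, h1]

lemma not_hammingAdj_one_self (u : Fin 2 → ZMod q) : ¬ hammingAdj 1 u u :=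
  fun h => (hammingAdj_one_iff.1 h).1 rfl

lemma hammingAdj_one_of_apply_eq {u w : Fin 2 → ZMod q} {i : Fin 2} (hne : u ≠ w)
    (h : u i = w i) : hammingAdj 1 u w :=
  hammingAdj_one_iff.2 ⟨hne, i, h⟩

lemma not_hammingAdj_one_of_apply_ne {u w : Fin 2 → ZMod q} (h0 : u 0 ≠ w 0)
    (h1 : u 1 ≠ w 1) : ¬ hammingAdj 1 u w := by
  rintro h
  obtain ⟨-, i, hi⟩ := hammingAdj_one_iff.1 h
  fin_cases i
  exacts [h0 hi, h1 hi]

def line (U : Finset (Fin 2 → ZMod q)) (i : Fin 2) (a : ZMod q) : Finset (Fin 2 → ZMod q) :=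
  U.filter (· i = a)

variable {U : Finset (Fin 2 → ZMod q)}

lemma eq_of_hammingAdj_one_of_hammingAdj_one {p s t : Fin 2 → ZMod q} {i : Fin 2}
    (hps : hammingAdj 1 p s) (hpt : hammingAdj 1 p t) (hst : s i = t i) (hp : p i ≠ s i) :
    s = t := by
  obtain ⟨-, k, hk⟩ := hammingAdj_one_iff.1 hps
  obtain ⟨-, l, hl⟩ := hammingAdj_one_iff.1 hpt
  have hki : k ≠ i := by rintro rfl; exact hp hk
  have hli : l ≠ i := by rintro rfl; exact hp (hl.trans hst.symm)
  obtain rfl : k = l := by omega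
  exact eq_of_apply_eq_of_apply_eq hki.symm hst (hk.symm.trans hl)

lemma shatters_of_collinear {x y z p : Fin 2 → ZMod q} {i : Fin 2} (hx : x ∈ U) (hy : y ∈ U)
    (hz : z ∈ U) (hp : p ∈ U) (hxy : x ≠ y) (hzx : z ≠ x) (hzy : z ≠ y) (hyi : y i = x i)
    (hzi : z i = x i) (hpx : ¬ hammingAdj 1 p x) (hpy : ¬ hammingAdj 1 p y) :
    Shatters 1 U {x, y} :=
  shatters_pair_s1
    ⟨z, hz, hammingAdj_one_of_apply_eq hzx hzi,
      hammingAdj_one_of_apply_eq hzy (hzi.trans hyi.symm)⟩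
    ⟨y, hy, hammingAdj_one_of_apply_eq hxy.symm hyi, not_hammingAdj_one_self y⟩
    ⟨x, hx, not_hammingAdj_one_self x, hammingAdj_one_of_apply_eq hxy hyi.symm⟩
    ⟨p, hp, hpx, hpy⟩

lemma apply_eq_of_collinear (hU : NoShatteredPair 1 U) {x y z : Fin 2 → ZMod q} {i : Fin 2}
    (hx : x ∈ U) (hy : y ∈ U) (hz : z ∈ U) (hxy : x ≠ y) (hxz : x ≠ z) (hyz : y ≠ z)
    (hyi : y i = x i) (hzi : z i = x i) {p : Fin 2 → ZMod q} (hp : p ∈ U) : p i = x i := by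
  by_contra hpi
  have adj_unique : ∀ {s t}, s i = x i → t i = x i → hammingAdj 1 p s → hammingAdj 1 p t →
      s = t := fun hs ht hps hpt =>
    eq_of_hammingAdj_one_of_hammingAdj_one hps hpt (hs.trans ht.symm) (hs ▸ hpi)
  by_cases hpx : hammingAdj 1 p x
  · refine hU y hy z hz hyz (shatters_of_collinear hy hz hx hp hyz hxy hxz
      (hzi.trans hyi.symm) hyi.symm (fun hpy => hxy ?_) (fun hpz => hxz ?_))
    exacts [adj_unique rfl hyi hpx hpy, adj_unique rfl hzi hpx hpz]
  by_cases hpy : hammingAdj 1 p y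
  · exact hU x hx z hz hxz (shatters_of_collinear hx hz hy hp hxz hxy.symm hyz hzi hyi
      hpx (fun hpz => hyz (adj_unique hyi hzi hpy hpz)))
  · exact hU x hx y hy hxy (shatters_of_collinear hx hy hz hp hxy hxz.symm hyz.symm hyi hzi
      hpx hpy)

lemma card_le_of_two_lt_card_line [NeZero q] (hU : NoShatteredPair 1 U) {i : Fin 2}
    {a : ZMod q} (h : 2 < (line U i a).card) : U.card ≤ q := by
  obtain ⟨x, hx, y, hy, z, hz, hxy, hxz, hyz⟩ := Finset.two_lt_card.1 h
  simp only [line, Finset.mem_filter] at hx hy hz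
  have hon : ∀ p ∈ U, p i = a := fun p hp =>
    (apply_eq_of_collinear hU hx.1 hy.1 hz.1 hxy hxz hyz (hy.2.trans hx.2.symm)
      (hz.2.trans hx.2.symm) hp).trans hx.2
  obtain ⟨j, hji⟩ := exists_ne i
  have hinj : Set.InjOn (fun p => p j) (U : Set (Fin 2 → ZMod q)) := fun p hp p' hp' hpp' =>
    eq_of_apply_eq_of_apply_eq hji.symm ((hon p hp).trans (hon p' hp').symm) hpp'
  calc U.card ≤ (Finset.univ : Finset (ZMod q)).card :=
        Finset.card_le_card_of_injOn _ (fun _ _ => Finset.mem_coe.2 (Finset.mem_univ _)) hinj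
    _ = q := by rw [Finset.card_univ, ZMod.card]

lemma card_line_eq_two [NeZero q] (i : Fin 2) (hU : 2 * q ≤ U.card)
    (hle : ∀ a, (line U i a).card ≤ 2) (a : ZMod q) : (line U i a).card = 2 := by
  by_contra hne
  have hlt : ∑ b, (line U i b).card < ∑ _b : ZMod q, 2 :=
    Finset.sum_lt_sum (fun b _ => hle b) ⟨a, Finset.mem_univ _, (hle a).lt_of_ne hne⟩
  have hsum : U.card = ∑ b, (line U i b).card :=
    Finset.card_eq_sum_card_fiberwise (fun _ _ => Finset.mem_univ _)
  rw [← hsum] at hlt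
  simp only [Finset.sum_const, Finset.card_univ, ZMod.card, smul_eq_mul] at hlt
  omega

lemma exists_ne_mem_line {x : Fin 2 → ZMod q} {i : Fin 2} (hline : (line U i (x i)).card = 2) :
    ∃ y ∈ U, y i = x i ∧ y ≠ x := by
  obtain ⟨y, hy, hyx⟩ := Finset.exists_mem_ne (by omega : 1 < (line U i (x i)).card) x
  simp only [line, Finset.mem_filter] at hy
  exact ⟨y, hy.1, hy.2, hyx⟩

lemma eq_of_card_line_le_two {x y z : Fin 2 → ZMod q} {i : Fin 2}
    (hline : (line U i (x i)).card ≤ 2) (hx : x ∈ U) (hy : y ∈ U) (hz : z ∈ U)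
    (hyi : y i = x i) (hzi : z i = x i) (hxy : x ≠ y) (hxz : x ≠ z) : y = z := by
  by_contra hyz
  exact hline.not_gt (Finset.two_lt_card.2 ⟨x, Finset.mem_filter.2 ⟨hx, rfl⟩,
    y, Finset.mem_filter.2 ⟨hy, hyi⟩, z, Finset.mem_filter.2 ⟨hz, hzi⟩, hxy, hxz, hyz⟩)

def rowPartnerGraph (U : Finset (Fin 2 → ZMod q)) : SimpleGraph (ZMod q) where
  Adj a a' := a ≠ a' ∧ ∃ x ∈ U, ∃ x' ∈ U, x 0 = a ∧ x' 0 = a' ∧ x' 1 = x 1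
  symm := ⟨fun _ _ ⟨h, x, hx, x', hx', h0, h0', h1⟩ =>
    ⟨h.symm, x', hx', x, hx, h0', h0, h1.symm⟩⟩
  loopless := ⟨fun _ h => h.1 rfl⟩

lemma apply_zero_eq_of_column_partners (hU : NoShatteredPair 1 U)
    (hline : ∀ i a, (line U i a).card = 2) {x y x' y' : Fin 2 → ZMod q} (hx : x ∈ U)
    (hy : y ∈ U) (hx' : x' ∈ U) (hy' : y' ∈ U) (hxy : y 0 = x 0) (hxx' : x' 1 = x 1)
    (hyy' : y' 1 = y 1) (hx'0 : x' 0 ≠ x 0) (hy'0 : y' 0 ≠ y 0) : x' 0 = y' 0 := by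
  by_contra hne
  by_cases hcol : y 1 = x 1
  · obtain rfl : y = x := eq_of_apply_eq_of_apply_eq (by decide) hxy hcol
    exact hne (congrArg (· 0) (eq_of_card_line_le_two (hline 1 _).le hy hx' hy' hxx' hyy'
      (ne_of_apply_ne (· 0) hx'0.symm) (ne_of_apply_ne (· 0) hy'0.symm)))
  -- Otherwise `{x', y}` is shattered by `x`, the other point `z` on the row of `x'`, `y'`, `x'`.
  obtain ⟨z, hz, hz0, hzx'⟩ := exists_ne_mem_line (hline 0 (x' 0))
  have hz1 : z 1 ≠ y 1 := fun hz1 => hne <| hz0.symm.trans <| congrArg (· 0) <|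
    eq_of_card_line_le_two (hline 1 _).le hy hz hy' hz1 hyy'
      (ne_of_apply_ne (· 0) (by rw [hz0, hxy]; exact hx'0.symm))
      (ne_of_apply_ne (· 0) hy'0.symm)
  refine hU x' hx' y hy (ne_of_apply_ne (· 0) (by rwa [hxy])) (shatters_pair_s1
    ⟨x, hx, hammingAdj_one_of_apply_eq (ne_of_apply_ne (· 0) hx'0.symm) hxx'.symm,
      hammingAdj_one_of_apply_eq (ne_of_apply_ne (· 1) (Ne.symm hcol)) hxy.symm⟩
    ⟨z, hz, hammingAdj_one_of_apply_eq hzx' hz0,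
      not_hammingAdj_one_of_apply_ne (by rwa [hz0, hxy]) hz1⟩
    ⟨y', hy', not_hammingAdj_one_of_apply_ne (Ne.symm hne) (by rwa [hyy', hxx']),
      hammingAdj_one_of_apply_eq (ne_of_apply_ne (· 0) hy'0) hyy'⟩
    ⟨x', hx', not_hammingAdj_one_self x',
      not_hammingAdj_one_of_apply_ne (by rwa [hxy]) (by rw [hxx']; exact Ne.symm hcol)⟩)

lemma existsUnique_rowPartnerGraph_adj (hU : NoShatteredPair 1 U)
    (hline : ∀ i a, (line U i a).card = 2) (a : ZMod q) :
    ∃! a', (rowPartnerGraph U).Adj a a' := by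
  obtain ⟨x, hx⟩ := Finset.card_pos.1 (by rw [hline 0 a]; norm_num : 0 < (line U 0 a).card)
  simp only [line, Finset.mem_filter] at hx
  obtain ⟨hx, rfl⟩ := hx
  obtain ⟨x', hx', hxx', hx'x⟩ := exists_ne_mem_line (hline 1 (x 1))
  have hx'0 : x' 0 ≠ x 0 := fun h => hx'x (eq_of_apply_eq_of_apply_eq (by decide) h hxx')
  refine ⟨x' 0, ⟨hx'0.symm, x, hx, x', hx', rfl, rfl, hxx'⟩, ?_⟩
  rintro _ ⟨hne, y, hy, y', hy', hxy, rfl, hyy'⟩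
  exact (apply_zero_eq_of_column_partners hU hline hx hy hx' hy' hxy hxx' hyy' hx'0
    (hxy ▸ Ne.symm hne)).symm

lemma even_of_card_line_eq_two [NeZero q] (hU : NoShatteredPair 1 U)
    (hline : ∀ i a, (line U i a).card = 2) : Even q := by
  have hperfect : (⊤ : (rowPartnerGraph U).Subgraph).IsPerfectMatching :=
    SimpleGraph.Subgraph.isPerfectMatching_iff.2 fun a => by
      simpa using existsUnique_rowPartnerGraph_adj hU hline a
  simpa using hperfect.even_card

end RookGraph

open RookGraph in
theorem vc_dim_ge_two_of_card_odd_general (q : ℕ) (hodd : Odd q)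
    (U : Finset (Fin 2 → ZMod q)) (hU : 2 * q ≤ U.card) :
    ∃ W ⊆ U, W.card = 2 ∧ Shatters 1 U W := by
  have : NeZero q := ⟨hodd.pos.ne'⟩
  by_contra hW
  have hpair : NoShatteredPair 1 U := fun x hx y hy hxy h =>
    hW ⟨{x, y}, Finset.insert_subset hx (Finset.singleton_subset_iff.2 hy),
      Finset.card_pair hxy, h⟩
  have hle : ∀ i a, (line U i a).card ≤ 2 := fun i a => by
    by_contra! h
    have := card_le_of_two_lt_card_line hpair h
    have := hodd.pos
    omega
  have hline : ∀ i a, (line U i a).card = 2 := fun i => card_line_eq_two i hU (hle i)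
  exact Nat.not_even_iff_odd.2 hodd (even_of_card_line_eq_two hpair hline)

/-- if `q ≥ 3` is odd and `U ⊆ V(H(2,q))` has `|U| ≥ 2q`,
then the VC-dimension of `(U, n(U))` is at least 2. -/
theorem vc_dim_ge_two_of_card_odd (q : ℕ) (hq : 3 ≤ q) (hodd : Odd q)
    (U : Finset (Fin 2 → ZMod q)) (hU : 2 * q ≤ U.card) :
    ∃ W ⊆ U, W.card = 2 ∧ Shatters 1 U W :=
  vc_dim_ge_two_of_card_odd_general q hodd U hU
end

section
/- For every natural number q ≥ 2 there exists a subset U of the vertices of the Hamming graph H(2,q) with |U| = 2q − i, where i = 0 if q is even and i = 1 if q is odd, such that the VC-dimension of (U, n(U)) is exactly 1. -/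
/-! Split `ZMod q` into the blocks `{2k, 2k+1}` (and the lone block `{q-1}` when `q` is odd)
and let `U` be the union of the squares `B × B`; it has `4⌊q/2⌋ + (q mod 2) = 2q - i` points.
Inside `U` a square with `|B| = 2` is an induced 4-cycle and distinct squares are not adjacent,
so two distinct vertices of `U` with a common neighbour in `U` are opposite on a 4-cycle and
have the same neighbours in `U`: no pair is shattered. A diagonal vertex `(x, x)` is shattered
by itself and its neighbour `(x, x')` in the same square. -/

open Finset

lemma hammingAdj_one_iff {q : ℕ} {u w : Fin 2 → ZMod q} :
    hammingAdj 1 u w ↔ (u 0 = w 0 ∧ u 1 ≠ w 1) ∨ (u 0 ≠ w 0 ∧ u 1 = w 1) := by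
  unfold hammingAdj
  rw [univ_fin2]
  by_cases h0 : u 0 = w 0 <;> by_cases h1 : u 1 = w 1 <;>
    simp [filter_insert, filter_singleton, h0, h1]

section Shattering

variable {d q t : ℕ} {U W : Finset (Fin d → ZMod q)}

lemma shatters_singleton {v u u' : Fin d → ZMod q} (hu : u ∈ U) (hu' : u' ∈ U)
    (hnadj : ¬ hammingAdj t u v) (hadj : hammingAdj t u' v) : Shatters t U {v} := by
  intro S hS
  rcases subset_singleton_iff.1 hS with rfl | rfl
  · exact ⟨u, hu, by simpa using hnadj⟩
  · exact ⟨u', hu', by simpa using hadj⟩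

lemma Shatters.card_le_one
    (htwin : ∀ a ∈ U, ∀ b ∈ U, ∀ u ∈ U, ∀ w ∈ U, a ≠ b →
      hammingAdj t u a → hammingAdj t u b → hammingAdj t w a → hammingAdj t w b)
    (hWU : W ⊆ U) (hW : Shatters t U W) : W.card ≤ 1 := by
  by_contra! hcard
  obtain ⟨a, ha, b, hb, hab⟩ := one_lt_card.1 hcard
  obtain ⟨u, hu, hu_ab⟩ := hW {a, b} (insert_subset ha (singleton_subset_iff.2 hb))
  obtain ⟨w, hw, hw_a⟩ := hW {a} (singleton_subset_iff.2 ha)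
  have hwb := htwin a (hWU ha) b (hWU hb) u hu w hw hab ((hu_ab a ha).1 (by simp))
    ((hu_ab b hb).1 (by simp)) ((hw_a a ha).1 (by simp))
  exact hab (mem_singleton.1 ((hw_a b hb).2 hwb)).symm

end Shattering

section FiberSquares

variable {α β : Type*} [Fintype α] [DecidableEq β]

def fiberSquares (f : α → β) : Finset (Fin 2 → α) :=
  univ.filter fun v => f (v 0) = f (v 1)

@[simp]
lemma mem_fiberSquares {f : α → β} {v : Fin 2 → α} :
    v ∈ fiberSquares f ↔ f (v 0) = f (v 1) := by
  simp [fiberSquares]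

lemma card_fiberSquares (f : α → β) : #(fiberSquares f) = ∑ x, #{y | f x = f y} := by
  rw [fiberSquares, ← Fintype.card_subtype]
  calc Fintype.card {v : Fin 2 → α // f (v 0) = f (v 1)}
      = Fintype.card {p : α × α // f p.1 = f p.2} :=
        Fintype.card_congr ((piFinTwoEquiv _).subtypeEquiv fun _ => Iff.rfl)
    _ = Fintype.card (Σ x, {y // f x = f y}) :=
        Fintype.card_congr (Equiv.subtypeProdEquivSigmaSubtype fun x y : α => f x = f y)
    _ = ∑ x, #{y | f x = f y} := by simp [Fintype.card_subtype]

end FiberSquares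

section FiberSquaresInHamming

variable {q : ℕ} [NeZero q] {β : Type*} [DecidableEq β] {f : ZMod q → β}

lemma shatters_fiberSquares_const {x y : ZMod q} (hxy : x ≠ y) (hfxy : f x = f y) :
    Shatters 1 (fiberSquares f) {fun _ => x} :=
  shatters_singleton (u := fun _ => x) (u' := ![x, y]) (by simp) (by simp [hfxy])
    (by simp [hammingAdj_one_iff]) (by simp [hammingAdj_one_iff, hxy.symm])

lemma hammingAdj_of_mem_fiberSquares
    (hf : ∀ x y z, f x = f y → f y = f z → x = y ∨ y = z ∨ x = z)
    {a b u w : Fin 2 → ZMod q} (ha : a ∈ fiberSquares f) (hb : b ∈ fiberSquares f)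
    (hu : u ∈ fiberSquares f) (hw : w ∈ fiberSquares f) (hab : a ≠ b)
    (hua : hammingAdj 1 u a) (hub : hammingAdj 1 u b) (hwa : hammingAdj 1 w a) :
    hammingAdj 1 w b := by
  have hab' : a 0 ≠ b 0 ∨ a 1 ≠ b 1 := by
    contrapose! hab
    ext i
    fin_cases i <;> simp [hab]
  rw [mem_fiberSquares] at ha hb hu hw
  rw [hammingAdj_one_iff] at hua hub hwa ⊢
  grind

end FiberSquaresInHamming

lemma sum_val_eq_sum_range {M : Type*} [AddCommMonoid M] (q : ℕ) [NeZero q] (g : ℕ → M) :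
    ∑ x : ZMod q, g x.val = ∑ n ∈ range q, g n := by
  obtain ⟨n, rfl⟩ := Nat.exists_eq_succ_of_ne_zero (NeZero.ne q)
  exact Fin.sum_univ_eq_sum_range g (n + 1)

lemma sum_card_filter_div_two_eq (q : ℕ) :
    ∑ n ∈ range q, #{m ∈ range q | n / 2 = m / 2} = 2 * q - q % 2 := by
  have hfiber : ∀ n ∈ range q,
      #{m ∈ range q | n / 2 = m / 2} + (if 2 * (n / 2) + 1 = q then 1 else 0) = 2 := by
    intro n hn
    rw [mem_range] at hn
    rw [show {m ∈ range q | n / 2 = m / 2} = Ico (2 * (n / 2)) (min q (2 * (n / 2) + 2)) by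
      ext m; simp only [mem_filter, mem_range, mem_Ico]; omega, Nat.card_Ico]
    split_ifs <;> omega
  have hlone : #{n ∈ range q | 2 * (n / 2) + 1 = q} = q % 2 := by
    rw [show {n ∈ range q | 2 * (n / 2) + 1 = q} = Ico (q - q % 2) q by
      ext n; simp only [mem_filter, mem_range, mem_Ico]; omega, Nat.card_Ico]
    omega
  have := sum_congr rfl hfiber
  rw [sum_add_distrib, sum_boole, Nat.cast_id, hlone, sum_const, card_range, smul_eq_mul] at this
  omega

section ValDivTwo

variable {q : ℕ} [NeZero q]

lemma eq_or_eq_or_eq_of_val_div_two_eq {x y z : ZMod q} (hxy : x.val / 2 = y.val / 2)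
    (hyz : y.val / 2 = z.val / 2) : x = y ∨ y = z ∨ x = z := by
  simp only [← (ZMod.val_injective q).eq_iff]
  omega

lemma card_fiberSquares_val_div_two :
    #(fiberSquares fun x : ZMod q => x.val / 2) = 2 * q - q % 2 := by
  have hfiber (x : ZMod q) :
      #{y : ZMod q | x.val / 2 = y.val / 2} = #{m ∈ range q | x.val / 2 = m / 2} := by
    simp only [card_filter]
    exact sum_val_eq_sum_range q fun m => if x.val / 2 = m / 2 then 1 else 0
  rw [card_fiberSquares]
  simp only [hfiber]
  rw [sum_val_eq_sum_range q fun n => #{m ∈ range q | n / 2 = m / 2}]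
  exact sum_card_filter_div_two_eq q

end ValDivTwo

/-- for every `q ≥ 2` there is `U ⊆ V(H(2,q))` with `|U| = 2q - i`,
where `i = 0` if `q` is even and `i = 1` if `q` is odd, whose VC-dimension is exactly 1. -/
theorem exists_vc_dim_one_H2q (q : ℕ) (hq : 2 ≤ q) :
    ∃ U : Finset (Fin 2 → ZMod q),
      U.card = 2 * q - (if Even q then 0 else 1) ∧
      (∃ W ⊆ U, W.card = 1 ∧ Shatters 1 U W) ∧
      (∀ W ⊆ U, Shatters 1 U W → W.card ≤ 1) := by
  have : Fact (1 < q) := ⟨hq⟩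
  set U := fiberSquares fun x : ZMod q => x.val / 2
  have hcard : U.card = 2 * q - (if Even q then 0 else 1) := by
    rw [card_fiberSquares_val_div_two]
    split_ifs with h <;> rw [Nat.even_iff] at h <;> omega
  have hsingleton : Shatters 1 U {fun _ => 0} :=
    shatters_fiberSquares_const zero_ne_one (by simp [ZMod.val_one])
  refine ⟨U, hcard, ⟨_, by simp [U], card_singleton _, hsingleton⟩, fun W hWU hW => ?_⟩
  exact hW.card_le_one (fun a ha b hb u hu w hw => hammingAdj_of_mem_fiberSquares
    (fun _ _ _ => eq_or_eq_or_eq_of_val_div_two_eq) ha hb hu hw) hWU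
end

section
/- Let q ≥ 4 be a natural number, and let U be a subset of the vertices of the Hamming graph H(2,q) with |U| ≥ 3q + 1. Then the VC-dimension of (U, n(U)) is exactly 3. -/
/-!
In `H(2,q)` two points are adjacent iff they are distinct and share a row or a column. A
shattered `4`-set would lie on the two lines through a common neighbour `u`, two of its points
on one line `L`; their common neighbours all lie on `L`, which leaves too few traces.

For the lower bound, call a line rich if it carries four points of `U`, three of which share
their cross line with another point of `U`. Without rich lines, summing over the lines of each
direction gives `|U| - t + 2s ≤ 3q` and `|U| - s + 2t ≤ 3q`, where `s` and `t` count the points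
alone on their row and on their column; hence `|U| ≤ 3q`. Three such points of a rich line are
shattered, unless `U` is covered by the line and their three cross lines; then two of these cross
lines carry `q + 4` points, so they contain a `4 × 2` grid, three of whose points are shattered.
-/

theorem Shatters.mono {d q t : ℕ} {U W W' : Finset (Fin d → ZMod q)} (h : Shatters t U W)
    (hW' : W' ⊆ W) : Shatters t U W' := fun S hS ↦
  let ⟨u, hu, hS'⟩ := h S (hS.trans hW')
  ⟨u, hu, fun w hw ↦ hS' w (hW' hw)⟩

namespace HammingPlane

variable {q : ℕ} {i j : Fin 2}

theorem ext_of_ne (hij : i ≠ j) {u v : Fin 2 → ZMod q} (hi : u i = v i) (hj : u j = v j) :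
    u = v := by
  funext k
  fin_cases i <;> fin_cases j <;> fin_cases k <;> simp_all

theorem hammingAdj_iff (hij : i ≠ j) {u v : Fin 2 → ZMod q} :
    hammingAdj 1 u v ↔ (u i = v i ∧ u j ≠ v j) ∨ (u i ≠ v i ∧ u j = v j) := by
  fin_cases i <;> fin_cases j <;> simp at hij <;>
    by_cases h0 : u 0 = v 0 <;> by_cases h1 : u 1 = v 1 <;>
    simp [hammingAdj, Finset.card_filter, Fin.sum_univ_two, h0, h1]

theorem hammingAdj_iff_ne_of_apply_eq (hij : i ≠ j) {u v : Fin 2 → ZMod q} (h : u i = v i) :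
    hammingAdj 1 u v ↔ u ≠ v := by
  rw [hammingAdj_iff hij]
  exact ⟨fun h' hv ↦ by simp_all, fun hne ↦ .inl ⟨h, fun hj ↦ hne (ext_of_ne hij h hj)⟩⟩

theorem hammingAdj_iff_apply_eq_of_apply_ne (hij : i ≠ j) {u v : Fin 2 → ZMod q}
    (h : u i ≠ v i) : hammingAdj 1 u v ↔ u j = v j := by
  simp [hammingAdj_iff hij, h]

theorem apply_eq_of_hammingAdj_of_hammingAdj (hij : i ≠ j) {v w₁ w₂ : Fin 2 → ZMod q}
    (h₁ : hammingAdj 1 v w₁) (h₂ : hammingAdj 1 v w₂) (hne : w₁ ≠ w₂) (hw : w₁ i = w₂ i) :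
    v i = w₁ i := by
  by_contra hv
  rw [hammingAdj_iff_apply_eq_of_apply_ne hij hv] at h₁
  rw [hammingAdj_iff_apply_eq_of_apply_ne hij (hw ▸ hv)] at h₂
  exact hne (ext_of_ne hij hw (h₁.symm.trans h₂))

theorem not_shatters_of_two_on_line (hij : i ≠ j) {U W : Finset (Fin 2 → ZMod q)}
    {u w₁ w₂ : Fin 2 → ZMod q} (hW : W.card = 4) (hu : ∀ w ∈ W, hammingAdj 1 u w)
    (hw₁ : w₁ ∈ W) (hw₂ : w₂ ∈ W) (hne : w₁ ≠ w₂) (h₁ : w₁ i = u i) (h₂ : w₂ i = u i) :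
    ¬ Shatters 1 U W := by
  intro hshat
  have on_line : ∀ {S}, S ⊆ W → w₁ ∈ S → w₂ ∈ S →
      ∃ v ∈ U, v i = u i ∧ ∀ w ∈ W, (w ∈ S ↔ hammingAdj 1 v w) := by
    intro S hS hS₁ hS₂
    obtain ⟨v, hv, hvS⟩ := hshat S hS
    have hvi := apply_eq_of_hammingAdj_of_hammingAdj hij ((hvS w₁ hw₁).1 hS₁)
      ((hvS w₂ hw₂).1 hS₂) hne (h₁.trans h₂.symm)
    exact ⟨v, hv, hvi.trans h₁, hvS⟩
  by_cases hline : ∀ w ∈ W, w i = u i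
  · -- the two points of `W` outside `{w₁, w₂}` would both equal the witness for `{w₁, w₂}`
    have hcard : 1 < ((W.erase w₁).erase w₂).card := by
      rw [Finset.card_erase_of_mem (Finset.mem_erase.2 ⟨hne.symm, hw₂⟩),
        Finset.card_erase_of_mem hw₁, hW]
      decide
    obtain ⟨w₃, hw₃, w₄, hw₄, hne₃₄⟩ := Finset.one_lt_card.1 hcard
    simp only [Finset.mem_erase] at hw₃ hw₄
    obtain ⟨v, -, hvi, hvS⟩ := on_line (S := {w₁, w₂}) (by grind) (by simp) (by simp)
    have eq_v : ∀ w ∈ W, w ≠ w₁ → w ≠ w₂ → v = w := fun w hw hw₁ hw₂ ↦ by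
      have := (hvS w hw).not.1 (by simp [hw₁, hw₂])
      rwa [hammingAdj_iff_ne_of_apply_eq hij (hvi.trans (hline w hw).symm), not_not] at this
    exact hne₃₄ ((eq_v w₃ hw₃.2.2 hw₃.2.1 hw₃.1).symm.trans (eq_v w₄ hw₄.2.2 hw₄.2.1 hw₄.1))
  · -- the witness for `{w₁, w₂, y}` is forced to be `u`, which sees all of `W`
    push Not at hline
    obtain ⟨y, hy, hyi⟩ := hline
    have hyj : u j = y j := (hammingAdj_iff_apply_eq_of_apply_ne hij (Ne.symm hyi)).1 (hu y hy)
    obtain ⟨w₃, hw₃, hw₃S⟩ : ∃ w₃ ∈ W, w₃ ∉ ({w₁, w₂, y} : Finset _) :=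
      Finset.exists_mem_notMem_of_card_lt_card (hW ▸ Finset.card_le_three.trans_lt (by decide))
    obtain ⟨v, -, hvi, hvS⟩ := on_line (S := {w₁, w₂, y}) (by grind) (by simp) (by simp)
    have hvj : v j = u j := by
      rw [← hvi] at hyi
      exact ((hammingAdj_iff_apply_eq_of_apply_ne hij (Ne.symm hyi)).1
        ((hvS y hy).1 (by simp))).trans hyj.symm
    exact hw₃S ((hvS w₃ hw₃).2 (ext_of_ne hij hvi hvj ▸ hu w₃ hw₃))

theorem card_le_three_of_shatters {U W : Finset (Fin 2 → ZMod q)} (h : Shatters 1 U W) :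
    W.card ≤ 3 := by
  by_contra! hW
  obtain ⟨W', hW'W, hW'⟩ := Finset.exists_subset_card_eq hW
  have h' := h.mono hW'W
  obtain ⟨u, -, hu⟩ := h' W' subset_rfl
  replace hu : ∀ w ∈ W', hammingAdj 1 u w := fun w hw ↦ (hu w hw).1 hw
  have hcover : W' ⊆ W'.filter (· 0 = u 0) ∪ W'.filter (· 1 = u 1) := fun w hw ↦ by
    have := (hammingAdj_iff zero_ne_one).1 (hu w hw)
    grind
  have := (Finset.card_le_card hcover).trans (Finset.card_union_le _ _)
  have two_on_line : ∀ i j : Fin 2, i ≠ j → 1 < (W'.filter (· i = u i)).card → False := by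
    intro i j hij h2
    obtain ⟨w₁, hw₁, w₂, hw₂, hne⟩ := Finset.one_lt_card.1 h2
    rw [Finset.mem_filter] at hw₁ hw₂
    exact not_shatters_of_two_on_line hij hW' hu hw₁.1 hw₂.1 hne hw₁.2 hw₂.2 h'
  rcases (by omega : 1 < (W'.filter (· 0 = u 0)).card ∨ 1 < (W'.filter (· 1 = u 1)).card)
    with h2 | h2
  exacts [two_on_line 0 1 zero_ne_one h2, two_on_line 1 0 one_ne_zero h2]

def line (U : Finset (Fin 2 → ZMod q)) (i : Fin 2) (a : ZMod q) : Finset (Fin 2 → ZMod q) :=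
  U.filter (· i = a)

@[simp]
theorem mem_line {U : Finset (Fin 2 → ZMod q)} {a : ZMod q} {u : Fin 2 → ZMod q} :
    u ∈ line U i a ↔ u ∈ U ∧ u i = a :=
  Finset.mem_filter

theorem injOn_line (hij : i ≠ j) (U : Finset (Fin 2 → ZMod q)) (a : ZMod q) :
    Set.InjOn (· j) (line U i a : Set (Fin 2 → ZMod q)) := fun u hu v hv huv ↦ by
  simp only [Finset.mem_coe, mem_line] at hu hv
  exact ext_of_ne hij (hu.2.trans hv.2.symm) huv

theorem card_line_le [NeZero q] (hij : i ≠ j) (U : Finset (Fin 2 → ZMod q)) (a : ZMod q) :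
    (line U i a).card ≤ q :=
  calc (line U i a).card = ((line U i a).image (· j)).card :=
        (Finset.card_image_of_injOn (injOn_line hij U a)).symm
    _ ≤ q := (Finset.card_le_univ _).trans_eq (ZMod.card q)

def IsLoneOnLine (U : Finset (Fin 2 → ZMod q)) (i : Fin 2) (u : Fin 2 → ZMod q) : Prop :=
  (line U i (u i)).card = 1

instance (U : Finset (Fin 2 → ZMod q)) (i : Fin 2) : DecidablePred (IsLoneOnLine U i) :=
  fun _ ↦ inferInstanceAs (Decidable (_ = 1))

def IsRichLine (U : Finset (Fin 2 → ZMod q)) (i j : Fin 2) (a : ZMod q) : Prop :=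
  4 ≤ (line U i a).card ∧ 3 ≤ ((line U i a).filter (¬ IsLoneOnLine U j ·)).card

theorem card_filter_eq_sum_line [NeZero q] (U : Finset (Fin 2 → ZMod q)) (i : Fin 2)
    (p : (Fin 2 → ZMod q) → Prop) [DecidablePred p] :
    (U.filter p).card = ∑ a, ((line U i a).filter p).card := by
  rw [Finset.card_eq_sum_card_fiberwise (f := (· i)) (t := Finset.univ) (by simp)]
  simp only [line, Finset.filter_comm]

theorem card_not_lone_add_two_mul_card_lone_le_three {U : Finset (Fin 2 → ZMod q)} {a : ZMod q}
    (h : ¬ IsRichLine U i j a) :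
    ((line U i a).filter (¬ IsLoneOnLine U j ·)).card
      + 2 * ((line U i a).filter (IsLoneOnLine U i ·)).card ≤ 3 := by
  have h₁ := Finset.card_filter_le (line U i a) (¬ IsLoneOnLine U j ·)
  have h₂ := Finset.card_filter_le (line U i a) (IsLoneOnLine U i ·)
  by_cases hone : (line U i a).card = 1
  · omega
  · have hempty : (line U i a).filter (IsLoneOnLine U i ·) = ∅ :=
      Finset.filter_eq_empty_iff.2 fun u hu hlone ↦ hone (by
        rw [mem_line] at hu
        rwa [IsLoneOnLine, hu.2] at hlone)
    rw [hempty, Finset.card_empty]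
    unfold IsRichLine at h
    omega

theorem card_not_lone_add_two_mul_card_lone_le [NeZero q] {U : Finset (Fin 2 → ZMod q)}
    (h : ∀ a, ¬ IsRichLine U i j a) :
    (U.filter (¬ IsLoneOnLine U j ·)).card + 2 * (U.filter (IsLoneOnLine U i ·)).card
      ≤ 3 * q := by
  rw [card_filter_eq_sum_line U i, card_filter_eq_sum_line U i, Finset.mul_sum,
    ← Finset.sum_add_distrib]
  calc _ ≤ ∑ _a : ZMod q, 3 :=
        Finset.sum_le_sum fun a _ ↦ card_not_lone_add_two_mul_card_lone_le_three (h a)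
    _ = 3 * q := by simp [mul_comm]

theorem exists_isRichLine [NeZero q] {U : Finset (Fin 2 → ZMod q)} (hU : 3 * q + 1 ≤ U.card) :
    ∃ i j : Fin 2, i ≠ j ∧ ∃ a, IsRichLine U i j a := by
  by_contra! h
  have h₀₁ := card_not_lone_add_two_mul_card_lone_le (h 0 1 zero_ne_one)
  have h₁₀ := card_not_lone_add_two_mul_card_lone_le (h 1 0 one_ne_zero)
  have e₀ := Finset.card_filter_add_card_filter_not (s := U) (IsLoneOnLine U 0 ·)
  have e₁ := Finset.card_filter_add_card_filter_not (s := U) (IsLoneOnLine U 1 ·)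
  omega

def mkPt (i : Fin 2) (x c : ZMod q) : Fin 2 → ZMod q :=
  Function.update (fun _ ↦ c) i x

@[simp]
theorem mkPt_apply_self (i : Fin 2) (x c : ZMod q) : mkPt i x c i = x :=
  Function.update_self ..

theorem mkPt_apply_of_ne (hij : i ≠ j) (x c : ZMod q) : mkPt i x c j = c :=
  Function.update_of_ne hij.symm ..

theorem mkPt_eta (hij : i ≠ j) (u : Fin 2 → ZMod q) : mkPt i (u i) (u j) = u :=
  ext_of_ne hij (mkPt_apply_self ..) (mkPt_apply_of_ne hij ..)

@[simp]
theorem hammingAdj_mkPt (i : Fin 2) (x y c d : ZMod q) :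
    hammingAdj 1 (mkPt i x c) (mkPt i y d) ↔ (x = y ∧ c ≠ d) ∨ (x ≠ y ∧ c = d) := by
  fin_cases i
  · simp [hammingAdj_iff zero_ne_one, mkPt_apply_of_ne zero_ne_one]
  · simp [hammingAdj_iff one_ne_zero, mkPt_apply_of_ne one_ne_zero]

@[simp]
theorem mkPt_inj (i : Fin 2) {x y c d : ZMod q} : mkPt i x c = mkPt i y d ↔ x = y ∧ c = d := by
  fin_cases i <;> simp [mkPt, funext_iff, Fin.forall_fin_two, Function.update, and_comm]

/-- The eight points of a `4 × 2` grid realise every trace on three of them: writing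
`Aₖ = mkPt i xₖ p` and `Bₖ = mkPt i xₖ p'`, the set `{A₁, A₂, B₃}` is cut out by
`A₃, A₄, B₁, B₂, A₂, A₁, B₄, B₃`. -/
theorem shatters_grid {U : Finset (Fin 2 → ZMod q)} {p p' x₁ x₂ x₃ x₄ : ZMod q} (hp : p ≠ p')
    (h₁₂ : x₁ ≠ x₂) (h₁₃ : x₁ ≠ x₃) (h₁₄ : x₁ ≠ x₄) (h₂₃ : x₂ ≠ x₃) (h₂₄ : x₂ ≠ x₄)
    (h₃₄ : x₃ ≠ x₄)
    (hU : ∀ x ∈ ({x₁, x₂, x₃, x₄} : Finset (ZMod q)), mkPt i x p ∈ U ∧ mkPt i x p' ∈ U) :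
    Shatters 1 U {mkPt i x₁ p, mkPt i x₂ p, mkPt i x₃ p'} := by
  intro S _
  simp only [Finset.mem_insert, Finset.mem_singleton, forall_eq_or_imp, forall_eq] at hU ⊢
  by_cases h₁ : mkPt i x₁ p ∈ S <;> by_cases h₂ : mkPt i x₂ p ∈ S <;>
    by_cases h₃ : mkPt i x₃ p' ∈ S
  · exact ⟨_, hU.2.2.1.1, by simp [*, Ne.symm]⟩
  · exact ⟨_, hU.2.2.2.1, by simp [*, Ne.symm]⟩
  · exact ⟨_, hU.1.2, by simp [*, Ne.symm]⟩
  · exact ⟨_, hU.2.1.1, by simp [*, Ne.symm]⟩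
  · exact ⟨_, hU.2.1.2, by simp [*, Ne.symm]⟩
  · exact ⟨_, hU.1.1, by simp [*, Ne.symm]⟩
  · exact ⟨_, hU.2.2.2.2, by simp [*, Ne.symm]⟩
  · exact ⟨_, hU.2.2.1.2, by simp [*, Ne.symm]⟩

theorem mem_image_line_iff (hij : i ≠ j) {U : Finset (Fin 2 → ZMod q)} {x c : ZMod q} :
    x ∈ (line U j c).image (· i) ↔ mkPt i x c ∈ U := by
  rw [Finset.mem_image]
  constructor
  · rintro ⟨u, hu, rfl⟩
    rw [mem_line] at hu
    rw [← hu.2, mkPt_eta hij]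
    exact hu.1
  · exact fun h ↦ ⟨_, mem_line.2 ⟨h, mkPt_apply_of_ne hij ..⟩, mkPt_apply_self ..⟩

/-- The two `j`-lines share four `i`-coordinates, hence contain a `4 × 2` grid. -/
theorem exists_shatters_of_card_line_add_card_line [NeZero q] (hij : i ≠ j)
    {U : Finset (Fin 2 → ZMod q)} {p p' : ZMod q} (hp : p ≠ p')
    (h : q + 4 ≤ (line U j p).card + (line U j p').card) :
    ∃ W ⊆ U, W.card = 3 ∧ Shatters 1 U W := by
  set R := (line U j p).image (· i)
  set R' := (line U j p').image (· i)
  have hR : R.card = (line U j p).card := Finset.card_image_of_injOn (injOn_line hij.symm U p)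
  have hR' : R'.card = (line U j p').card :=
    Finset.card_image_of_injOn (injOn_line hij.symm U p')
  have hunion : (R ∪ R').card ≤ q := (Finset.card_le_univ _).trans_eq (ZMod.card q)
  have hinter : 3 < (R ∩ R').card := by
    have := Finset.card_union_add_card_inter R R'
    omega
  have hgrid : ∀ x ∈ R ∩ R', mkPt i x p ∈ U ∧ mkPt i x p' ∈ U := fun x hx ↦ by
    rw [Finset.mem_inter, mem_image_line_iff hij, mem_image_line_iff hij] at hx
    exact hx
  obtain ⟨x₄, hx₄⟩ := Finset.card_pos.1 (by omega : 0 < (R ∩ R').card)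
  obtain ⟨x₁, x₂, x₃, hx₁, hx₂, hx₃, h₁₂, h₁₃, h₂₃⟩ := Finset.two_lt_card_iff.1
    (by rw [Finset.card_erase_of_mem hx₄]; omega : 2 < ((R ∩ R').erase x₄).card)
  rw [Finset.mem_erase] at hx₁ hx₂ hx₃
  refine ⟨{mkPt i x₁ p, mkPt i x₂ p, mkPt i x₃ p'}, ?_, ?_, shatters_grid hp h₁₂ h₁₃ hx₁.1
    h₂₃ hx₂.1 hx₃.1 ?_⟩
  · simp [Finset.insert_subset_iff, hgrid _ hx₁.2, hgrid _ hx₂.2, hgrid _ hx₃.2]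
  · exact Finset.card_eq_three.2 ⟨_, _, _, by simp [h₁₂], by simp [hp], by simp [hp], rfl⟩
  · simp [hgrid _ hx₁.2, hgrid _ hx₂.2, hgrid _ hx₃.2, hgrid _ hx₄]

/-- The witness for `W` is the point given by `hrow`, for `W \ {w}` it is `w` itself, for `{w}`
the point given by `hcol`, and for `∅` the one given by `hfree`. -/
theorem shatters_of_subset_line (hij : i ≠ j) {U W : Finset (Fin 2 → ZMod q)} {a : ZMod q}
    (hWU : W ⊆ U) (hW : W.card = 3) (hWa : ∀ w ∈ W, w i = a)
    (hrow : ∃ u ∈ U, u i = a ∧ u ∉ W)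
    (hcol : ∀ w ∈ W, ∃ v ∈ U, v i ≠ a ∧ v j = w j)
    (hfree : ∃ v ∈ U, v i ≠ a ∧ ∀ w ∈ W, v j ≠ w j) :
    Shatters 1 U W := by
  have on_line : ∀ u, u i = a → ∀ w ∈ W, (hammingAdj 1 u w ↔ u ≠ w) := fun u hu w hw ↦
    hammingAdj_iff_ne_of_apply_eq hij (hu.trans (hWa w hw).symm)
  have off_line : ∀ v, v i ≠ a → ∀ w ∈ W, (hammingAdj 1 v w ↔ v j = w j) := fun v hv w hw ↦
    hammingAdj_iff_apply_eq_of_apply_ne hij (hWa w hw ▸ hv)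
  intro S hS
  have hS3 : S.card ≤ 3 := hW ▸ Finset.card_le_card hS
  interval_cases hcard : S.card
  · obtain ⟨v, hv, hva, hvW⟩ := hfree
    refine ⟨v, hv, fun w hw ↦ ?_⟩
    simp [Finset.card_eq_zero.1 hcard, off_line v hva w hw, hvW w hw]
  · obtain ⟨w₀, rfl⟩ := Finset.card_eq_one.1 hcard
    have hw₀ := hS (Finset.mem_singleton_self w₀)
    obtain ⟨v, hv, hva, hvw₀⟩ := hcol w₀ hw₀
    refine ⟨v, hv, fun w hw ↦ ?_⟩
    rw [off_line v hva w hw, hvw₀, Finset.mem_singleton]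
    exact ⟨fun h ↦ h ▸ rfl, fun h ↦ ext_of_ne hij ((hWa w hw).trans (hWa w₀ hw₀).symm) h.symm⟩
  · obtain ⟨w₀, hw₀⟩ := Finset.card_eq_one.1
      (by rw [Finset.card_sdiff_of_subset hS, hW, hcard] : (W \ S).card = 1)
    have hw₀W : w₀ ∈ W := (Finset.mem_sdiff.1 (hw₀ ▸ Finset.mem_singleton_self w₀)).1
    refine ⟨w₀, hWU hw₀W, fun w hw ↦ ?_⟩
    rw [on_line w₀ (hWa w₀ hw₀W) w hw, ne_comm, Ne, ← Finset.mem_singleton, ← hw₀,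
      Finset.mem_sdiff]
    tauto
  · obtain ⟨u, hu, hua, huW⟩ := hrow
    refine ⟨u, hu, fun w hw ↦ ?_⟩
    rw [Finset.eq_of_subset_of_card_le hS (by omega), on_line u hua w hw]
    exact iff_of_true hw (ne_of_mem_of_not_mem hw huW).symm

/-- Counting forces two of the three `j`-lines to carry `q + 4` points. -/
theorem exists_shatters_of_subset_line_union_lines [NeZero q] (hij : i ≠ j) (hq : 4 ≤ q)
    {U : Finset (Fin 2 → ZMod q)} (hU : 3 * q + 1 ≤ U.card) {a : ZMod q}
    {w₁ w₂ w₃ : Fin 2 → ZMod q} (h₁₂ : w₁ ≠ w₂) (h₁₃ : w₁ ≠ w₃) (h₂₃ : w₂ ≠ w₃)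
    (hW : {w₁, w₂, w₃} ⊆ line U i a)
    (hcover : ∀ v ∈ U, v i ≠ a → v j = w₁ j ∨ v j = w₂ j ∨ v j = w₃ j) :
    ∃ W ⊆ U, W.card = 3 ∧ Shatters 1 U W := by
  simp only [Finset.insert_subset_iff, Finset.singleton_subset_iff] at hW
  obtain ⟨hw₁, hw₂, hw₃⟩ := hW
  have hU_sub : U ⊆ (line U i a \ {w₁, w₂, w₃}) ∪ line U j (w₁ j) ∪ line U j (w₂ j)
      ∪ line U j (w₃ j) := fun v hv ↦ by
    simp only [Finset.mem_union, Finset.mem_sdiff, mem_line, Finset.mem_insert,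
      Finset.mem_singleton]
    by_cases hvW : v = w₁ ∨ v = w₂ ∨ v = w₃
    · rcases hvW with rfl | rfl | rfl <;> simp [hv]
    · by_cases hva : v i = a
      · tauto
      · have := hcover v hv hva
        tauto
  have hcard : U.card ≤ (line U i a \ {w₁, w₂, w₃}).card + (line U j (w₁ j)).card
      + (line U j (w₂ j)).card + (line U j (w₃ j)).card := by
    grw [Finset.card_le_card hU_sub, Finset.card_union_le, Finset.card_union_le,
      Finset.card_union_le]
  rw [Finset.card_sdiff_of_subset (by simp [Finset.insert_subset_iff, *]),
    Finset.card_eq_three.2 ⟨_, _, _, h₁₂, h₁₃, h₂₃, rfl⟩] at hcard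
  have hline := card_line_le hij U a
  have hinj := injOn_line hij U a
  have hj₁₂ : w₁ j ≠ w₂ j := hinj.ne hw₁ hw₂ h₁₂
  have hj₁₃ : w₁ j ≠ w₃ j := hinj.ne hw₁ hw₃ h₁₃
  have hj₂₃ : w₂ j ≠ w₃ j := hinj.ne hw₂ hw₃ h₂₃
  rcases (by omega : q + 4 ≤ (line U j (w₁ j)).card + (line U j (w₂ j)).card ∨
      q + 4 ≤ (line U j (w₁ j)).card + (line U j (w₃ j)).card ∨
      q + 4 ≤ (line U j (w₂ j)).card + (line U j (w₃ j)).card) with h | h | h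
  exacts [exists_shatters_of_card_line_add_card_line hij hj₁₂ h,
    exists_shatters_of_card_line_add_card_line hij hj₁₃ h,
    exists_shatters_of_card_line_add_card_line hij hj₂₃ h]

theorem exists_ne_apply_eq_of_not_isLoneOnLine (hij : i ≠ j) {U : Finset (Fin 2 → ZMod q)}
    {w : Fin 2 → ZMod q} (hw : w ∈ U) (h : ¬ IsLoneOnLine U j w) :
    ∃ v ∈ U, v i ≠ w i ∧ v j = w j := by
  have hpos : 0 < (line U j (w j)).card := Finset.card_pos.2 ⟨w, mem_line.2 ⟨hw, rfl⟩⟩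
  obtain ⟨v, hv, hvw⟩ := Finset.exists_mem_ne
    (by unfold IsLoneOnLine at h; omega : 1 < (line U j (w j)).card) w
  rw [mem_line] at hv
  exact ⟨v, hv.1, fun hi ↦ hvw (ext_of_ne hij hi hv.2), hv.2⟩

theorem exists_shatters_of_isRichLine [NeZero q] (hij : i ≠ j) (hq : 4 ≤ q)
    {U : Finset (Fin 2 → ZMod q)} (hU : 3 * q + 1 ≤ U.card) {a : ZMod q}
    (h : IsRichLine U i j a) :
    ∃ W ⊆ U, W.card = 3 ∧ Shatters 1 U W := by
  obtain ⟨hbig, hshared⟩ := h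
  obtain ⟨W, hWsub, hW⟩ := Finset.exists_subset_card_eq hshared
  have hWline : W ⊆ line U i a := hWsub.trans (Finset.filter_subset _ _)
  have hWU : W ⊆ U := hWline.trans (Finset.filter_subset _ _)
  have hWa : ∀ w ∈ W, w i = a := fun w hw ↦ (mem_line.1 (hWline hw)).2
  by_cases hfree : ∃ v ∈ U, v i ≠ a ∧ ∀ w ∈ W, v j ≠ w j
  · refine ⟨W, hWU, hW, shatters_of_subset_line hij hWU hW hWa ?_ ?_ hfree⟩
    · obtain ⟨u, hu, huW⟩ :=
        Finset.exists_mem_notMem_of_card_lt_card (by omega : W.card < (line U i a).card)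
      exact ⟨u, (mem_line.1 hu).1, (mem_line.1 hu).2, huW⟩
    · intro w hw
      have hw' := hWsub hw
      rw [Finset.mem_filter] at hw'
      simpa only [hWa w hw] using exists_ne_apply_eq_of_not_isLoneOnLine hij (hWU hw) hw'.2
  · push Not at hfree
    obtain ⟨w₁, w₂, w₃, h₁₂, h₁₃, h₂₃, rfl⟩ := Finset.card_eq_three.1 hW
    refine exists_shatters_of_subset_line_union_lines hij hq hU h₁₂ h₁₃ h₂₃ hWline
      fun v hv hva ↦ ?_
    obtain ⟨w, hw, hvw⟩ := hfree v hv hva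
    simp only [Finset.mem_insert, Finset.mem_singleton] at hw
    rcases hw with rfl | rfl | rfl <;> simp [hvw]

end HammingPlane

/-- if `q ≥ 4` and `U ⊆ V(H(2,q))` has `|U| ≥ 3q+1`,
then the VC-dimension of `(U, n(U))` is exactly 3. -/
theorem vc_dim_eq_three_of_card (q : ℕ) (hq : 4 ≤ q)
    (U : Finset (Fin 2 → ZMod q)) (hU : 3 * q + 1 ≤ U.card) :
    (∃ W ⊆ U, W.card = 3 ∧ Shatters 1 U W) ∧
    (∀ W ⊆ U, Shatters 1 U W → W.card ≤ 3) := by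
  have : NeZero q := ⟨by omega⟩
  obtain ⟨i, j, hij, a, ha⟩ := HammingPlane.exists_isRichLine hU
  exact ⟨HammingPlane.exists_shatters_of_isRichLine hij hq hU ha,
    fun W _ hW ↦ HammingPlane.card_le_three_of_shatters hW⟩
end

section
/- Let q ≥ 4 be a natural number and let U be a subset of the vertices of the Hamming graph H(2,q). If the VC-dimension of (U, n(U)) is 3, then there is a rectilinear line containing at least four vertices of U. -/
/-!
Let `W = {a, b, c}` be shattered. A vertex `u ∈ U` adjacent to all of `W` agrees with each of
its points in one of the two coordinates, so by pigeonhole it lies on a line with two of them,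
say `a` and `b`. A vertex `u' ∈ U` adjacent to `a` and `b` but not to `c` lies on that line too,
because in `H(2,q)` a common neighbour of two distinct points of a line lies on the line; and
`u' ≠ u` since only `u` is adjacent to `c`. Thus `a, b, u, u'` are four points of `U` on a line.
-/

theorem ne_of_hammingAdj {d q t : ℕ} {x y : Fin d → ZMod q} (ht : t ≠ 0)
    (h : hammingAdj t x y) : x ≠ y := by
  rintro rfl
  simp [hammingAdj] at h
  exact ht h.symm

theorem hammingAdj_one_iff_fin_two {q : ℕ} {x y : Fin 2 → ZMod q} :
    hammingAdj 1 x y ↔ x ≠ y ∧ ∃ i, x i = y i := by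
  have huniv : (Finset.univ : Finset (Fin 2)) = {0, 1} := rfl
  rw [hammingAdj, huniv, Ne, funext_iff, Fin.forall_fin_two, Fin.exists_fin_two]
  by_cases h0 : x 0 = y 0 <;> by_cases h1 : x 1 = y 1 <;>
    simp [Finset.filter_insert, Finset.filter_singleton, h0, h1]

theorem apply_eq_of_hammingAdj_of_hammingAdj {q : ℕ} {u a b : Fin 2 → ZMod q} {i : Fin 2}
    (hab : a ≠ b) (hi : a i = b i) (ha : hammingAdj 1 u a) (hb : hammingAdj 1 u b) :
    u i = a i := by
  obtain ⟨-, j, hj⟩ := hammingAdj_one_iff_fin_two.mp ha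
  obtain ⟨-, k, hk⟩ := hammingAdj_one_iff_fin_two.mp hb
  by_contra hui
  have hji : j ≠ i := by rintro rfl; exact hui hj
  have hki : k ≠ i := by rintro rfl; exact hui (hk.trans hi.symm)
  obtain rfl : k = j := by omega
  refine hab (funext fun m => ?_)
  rcases (by omega : m = i ∨ m = k) with rfl | rfl
  · exact hi
  · exact hj.symm.trans hk

theorem exists_pair_on_line_of_forall_hammingAdj {q : ℕ} {u : Fin 2 → ZMod q}
    {W : Finset (Fin 2 → ZMod q)} (hW : 2 < W.card) (hu : ∀ w ∈ W, hammingAdj 1 u w) :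
    ∃ a ∈ W, ∃ b ∈ W, a ≠ b ∧ ∃ i, u i = a i ∧ u i = b i := by
  choose! coord hcoord using fun w hw => (hammingAdj_one_iff_fin_two.mp (hu w hw)).2
  obtain ⟨a, ha, b, hb, hab, hi⟩ :=
    Finset.exists_ne_map_eq_of_card_lt_of_maps_to (t := Finset.univ) (by simpa using hW)
      (fun w _ => Finset.mem_coe.mpr (Finset.mem_univ (coord w)))
  exact ⟨a, ha, b, hb, hab, coord a, hcoord a ha, hi ▸ hcoord b hb⟩

theorem line_with_four_points_of_vc_dim_three_general (q : ℕ)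
    (U : Finset (Fin 2 → ZMod q))
    (hvc₁ : ∃ W ⊆ U, W.card = 3 ∧ Shatters 1 U W) :
    ∃ (i : Fin 2) (c : ZMod q), 4 ≤ (U.filter fun v => v i = c).card := by
  obtain ⟨W, hWU, hW3, hsh⟩ := hvc₁
  obtain ⟨u, huU, hu⟩ := hsh W subset_rfl
  have huW : ∀ w ∈ W, hammingAdj 1 u w := fun w hw => (hu w hw).mp hw
  obtain ⟨a, ha, b, hb, hab, i, hia, hib⟩ :=
    exists_pair_on_line_of_forall_hammingAdj (by omega) huW
  have habi : a i = b i := hia.symm.trans hib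
  obtain ⟨c, hc, hcab⟩ := Finset.exists_mem_notMem_of_card_lt_card (s := {a, b}) (t := W)
    (by rw [hW3]; exact Finset.card_le_two.trans_lt (by norm_num))
  obtain ⟨u', hu'U, hu'⟩ := hsh {a, b} (by simp [Finset.insert_subset_iff, ha, hb])
  have hu'a : hammingAdj 1 u' a := (hu' a ha).mp (by simp)
  have hu'b : hammingAdj 1 u' b := (hu' b hb).mp (by simp)
  have hu'i : u' i = a i := apply_eq_of_hammingAdj_of_hammingAdj hab habi hu'a hu'b
  have huu' : u ≠ u' := by
    rintro rfl
    exact hcab ((hu' c hc).mpr (huW c hc))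
  have hline : {a, b, u, u'} ⊆ U.filter fun v => v i = a i := by
    simp [Finset.insert_subset_iff, hWU ha, hWU hb, huU, hu'U, hia, habi, hu'i]
  have hne {x y : Fin 2 → ZMod q} (h : hammingAdj 1 x y) : y ≠ x :=
    (ne_of_hammingAdj one_ne_zero h).symm
  refine ⟨i, a i, le_of_eq_of_le ?_ (Finset.card_le_card hline)⟩
  exact (Finset.card_eq_four.mpr ⟨a, b, u, u', hab, hne (huW a ha), hne hu'a, hne (huW b hb),
    hne hu'b, huu', rfl⟩).symm

/-- if `q ≥ 4` and the VC-dimension of `(U, n(U))` is 3 for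
`U ⊆ V(H(2,q))`, then some rectilinear line contains at least four vertices of `U`. -/
theorem line_with_four_points_of_vc_dim_three (q : ℕ) (hq : 4 ≤ q)
    (U : Finset (Fin 2 → ZMod q))
    (hvc₁ : ∃ W ⊆ U, W.card = 3 ∧ Shatters 1 U W)
    (hvc₂ : ∀ W ⊆ U, Shatters 1 U W → W.card ≤ 3) :
    ∃ (i : Fin 2) (c : ZMod q), 4 ≤ (U.filter fun v => v i = c).card :=
  line_with_four_points_of_vc_dim_three_general q U hvc₁
end

section
/- Let d ≥ 2 and q ≥ 4 be natural numbers, and let U be a subset of the vertices of the Hamming graph H(d,q,2) with |U| ≥ 2q^(d−1). Then the VC-dimension of (U, n(U)) is at least 2. -/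
open Finset Fintype

section Bipartite

variable {α β : Type*} [Fintype α] [Fintype β] [DecidableEq α] [DecidableEq β]
  {E : Finset (α × β)}

theorem card_lt_of_injOn_of_forall_ne {ι γ : Type*} [Fintype γ] [DecidableEq γ] {s : Finset ι}
    {f : ι → γ} (hf : Set.InjOn f s) {v : γ} (hv : ∀ i ∈ s, f i ≠ v) : #s < card γ := by
  rw [← card_image_of_injOn hf]
  exact card_lt_univ_of_notMem (by simpa using hv)

theorem card_lt_card_add_card_of_forall_not_path (hE : E.Nonempty)
    (h : ∀ r₁ r₂ c₁ c₂, r₁ ≠ r₂ → c₁ ≠ c₂ → (r₁, c₁) ∈ E → (r₁, c₂) ∈ E → (r₂, c₂) ∉ E) :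
    #E < card α + card β := by
  let rowAlone (e : α × β) : Prop := ∀ e' ∈ E, e'.1 = e.1 → e' = e
  have colAlone : ∀ e ∈ E, ¬rowAlone e → ∀ e' ∈ E, e'.2 = e.2 → e' = e := by
    rintro ⟨r, c⟩ he hrow ⟨r', c'⟩ he' (hc : c' = c)
    obtain ⟨⟨r'', c''⟩, he'', hr : r'' = r, hne⟩ : ∃ e' ∈ E, e'.1 = r ∧ e' ≠ (r, c) := by
      simpa [rowAlone] using hrow
    subst hc hr
    by_contra hne'
    exact h r'' r' c'' c' (by grind) (by grind) he'' he he'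
  let charge (e : α × β) : α ⊕ β := if rowAlone e then .inl e.1 else .inr e.2
  obtain ⟨e₀, he₀⟩ := hE
  rw [← card_sum]
  -- the endpoint of `e₀` to which `e₀` is not charged receives no charge at all
  refine card_lt_of_injOn_of_forall_ne (f := charge)
    (v := if rowAlone e₀ then .inr e₀.2 else .inl e₀.1) ?_ ?_
  · intro e he e' he' hee'
    by_cases hr : rowAlone e <;> by_cases hr' : rowAlone e' <;>
      simp only [charge, hr, hr', ↓reduceIte, Sum.inl.injEq, Sum.inr.injEq, reduceCtorEq] at hee'
    · exact hr' e he hee'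
    · exact colAlone e he hr e' he' hee'.symm |>.symm
  · intro e he hev
    by_cases hr : rowAlone e <;> by_cases hr₀ : rowAlone e₀ <;>
      simp only [charge, hr, hr₀, ↓reduceIte, Sum.inl.injEq, Sum.inr.injEq, reduceCtorEq] at hev
    · exact hr₀ (hr e₀ he₀ hev.symm ▸ hr)
    · exact hr (colAlone e he hr e₀ he₀ hev.symm ▸ hr₀)

theorem card_lt_card_add_card_of_path {r₁ r₂ : α} {c₁ c₂ : β} (hr : r₁ ≠ r₂) (h₁ : (r₁, c₁) ∈ E)
    (h₂ : (r₁, c₂) ∈ E) (h₃ : (r₂, c₂) ∈ E)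
    (hsq : ∀ r r' c c', r ≠ r' → c ≠ c' → (r, c) ∈ E → (r, c') ∈ E → (r', c) ∈ E → (r', c') ∉ E)
    (hcover : ∀ e ∈ E, e.1 = r₁ ∨ e.1 = r₂ ∨ e.2 = c₁ ∨ e.2 = c₂) :
    #E < card α + card β := by
  -- Two edges charged to the same row `r ≠ r₁` would close a `4`-cycle with row `r₁`; two
  -- charged to the same column lie in rows `r₁` and `r₂` and would close one with column `c₂`.
  let toRow (e : α × β) : Prop := e.1 ≠ r₁ ∧ (e.2 = c₁ ∨ e.2 = c₂)
  let charge (e : α × β) : α ⊕ β := if toRow e then .inl e.1 else .inr e.2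
  rw [← card_sum]
  refine card_lt_of_injOn_of_forall_ne (f := charge) (v := .inl r₁) ?_ ?_
  · rintro ⟨r, c⟩ he ⟨r', c'⟩ he' hee'
    by_cases hp : toRow (r, c) <;> by_cases hp' : toRow (r', c') <;>
      simp only [charge, hp, hp', ↓reduceIte, Sum.inl.injEq, Sum.inr.injEq, reduceCtorEq] at hee'
    · subst hee'
      by_contra hcc
      have hc₁₂ : ∀ c, c = c₁ ∨ c = c₂ → (r₁, c) ∈ E := by rintro _ (rfl | rfl) <;> assumption
      exact hsq r₁ r c c' (Ne.symm hp.1) (by grind) (hc₁₂ c hp.2) (hc₁₂ c' hp'.2) he he'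
    · subst hee'
      have := hcover _ he
      have := hcover _ he'
      have := hsq r₁ r₂ c c₂ hr
      grind
  · intro e he hev
    by_cases hp : toRow e <;>
      simp only [charge, hp, ↓reduceIte, Sum.inl.injEq, reduceCtorEq] at hev
    exact hp.1 hev

theorem card_lt_card_add_card_of_forall_meets (h4 : 4 < #E)
    (hpath : ∀ r₁ r₂ c₁ c₂, r₁ ≠ r₂ → c₁ ≠ c₂ → (r₁, c₁) ∈ E → (r₁, c₂) ∈ E → (r₂, c₂) ∈ E →
      ∀ e ∈ E, e.1 = r₁ ∨ e.1 = r₂ ∨ e.2 = c₁ ∨ e.2 = c₂)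
    (hrow : ∀ r r' c₁ c₂, r ≠ r' → c₁ ≠ c₂ → (r, c₁) ∈ E → (r, c₂) ∈ E → (r', c₁) ∈ E →
      (r', c₂) ∈ E → ∀ e ∈ E, e.1 = r ∨ e.2 = c₁ ∨ e.2 = c₂)
    (hcol : ∀ r₁ r₂ c c', r₁ ≠ r₂ → c ≠ c' → (r₁, c) ∈ E → (r₂, c) ∈ E → (r₁, c') ∈ E →
      (r₂, c') ∈ E → ∀ e ∈ E, e.2 = c ∨ e.1 = r₁ ∨ e.1 = r₂) :
    #E < card α + card β := by
  by_cases hsq : ∃ r r' c c', r ≠ r' ∧ c ≠ c' ∧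
      (r, c) ∈ E ∧ (r, c') ∈ E ∧ (r', c) ∈ E ∧ (r', c') ∈ E
  · obtain ⟨r, r', c, c', hr, hc, h₁, h₂, h₃, h₄⟩ := hsq
    have hsub : E ⊆ {(r, c), (r, c'), (r', c), (r', c')} := by
      rintro ⟨x, y⟩ he
      have := hrow r r' c c' hr hc h₁ h₂ h₃ h₄ _ he
      have := hrow r' r c c' hr.symm hc h₃ h₄ h₁ h₂ _ he
      have := hcol r r' c c' hr hc h₁ h₃ h₂ h₄ _ he
      have := hcol r r' c' c hr hc.symm h₂ h₄ h₁ h₃ _ he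
      simp only [mem_insert, mem_singleton, Prod.mk.injEq]
      grind
    have := (card_le_card hsub).trans card_le_four
    omega
  push Not at hsq
  by_cases hpath' : ∃ r₁ r₂ c₁ c₂, r₁ ≠ r₂ ∧ c₁ ≠ c₂ ∧
      (r₁, c₁) ∈ E ∧ (r₁, c₂) ∈ E ∧ (r₂, c₂) ∈ E
  · obtain ⟨r₁, r₂, c₁, c₂, hr, hc, h₁, h₂, h₃⟩ := hpath'
    exact card_lt_card_add_card_of_path hr h₁ h₂ h₃ hsq (hpath r₁ r₂ c₁ c₂ hr hc h₁ h₂ h₃)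
  push Not at hpath'
  exact card_lt_card_add_card_of_forall_not_path (card_pos.1 (by omega)) hpath'

end Bipartite

def HasShatteredPair {d q : ℕ} (U : Finset (Fin d → ZMod q)) : Prop :=
  ∃ W ⊆ U, #W = 2 ∧ Shatters 2 U W

section Hamming

variable {n q t : ℕ}

theorem hammingDist_cons_cons {α : Type*} [DecidableEq α] (c : α) (x y : Fin n → α) :
    hammingDist (Fin.cons c x : Fin (n + 1) → α) (Fin.cons c y) = hammingDist x y := by
  simp [hammingDist, card_filter, Fin.sum_univ_succ]

theorem hammingAdj_cons_cons (c : ZMod q) (x y : Fin n → ZMod q) :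
    hammingAdj t (Fin.cons c x : Fin (n + 1) → ZMod q) (Fin.cons c y) ↔ hammingAdj t x y := by
  change hammingDist _ _ = t ↔ hammingDist x y = t
  rw [hammingDist_cons_cons]

theorem hammingAdj_two_iff {u w : Fin 2 → ZMod q} :
    hammingAdj 2 u w ↔ u 0 ≠ w 0 ∧ u 1 ≠ w 1 := by
  simp only [hammingAdj, card_filter, Fin.sum_univ_two]
  split_ifs <;> simp_all

theorem shatters_pair_s14 {U : Finset (Fin n → ZMod q)} {w₁ w₂ : Fin n → ZMod q}
    (h₀ : ∃ u ∈ U, ¬hammingAdj t u w₁ ∧ ¬hammingAdj t u w₂)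
    (h₁ : ∃ u ∈ U, hammingAdj t u w₁ ∧ ¬hammingAdj t u w₂)
    (h₂ : ∃ u ∈ U, ¬hammingAdj t u w₁ ∧ hammingAdj t u w₂)
    (h₁₂ : ∃ u ∈ U, hammingAdj t u w₁ ∧ hammingAdj t u w₂) :
    Shatters t U {w₁, w₂} := by
  intro S _
  obtain ⟨u, hu, hu₁, hu₂⟩ :
      ∃ u ∈ U, (w₁ ∈ S ↔ hammingAdj t u w₁) ∧ (w₂ ∈ S ↔ hammingAdj t u w₂) := by
    by_cases w₁ ∈ S <;> by_cases w₂ ∈ S <;> simp_all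
  exact ⟨u, hu, by simp [hu₁, hu₂]⟩

def headFiber (U : Finset (Fin (n + 1) → ZMod q)) (c : ZMod q) : Finset (Fin n → ZMod q) :=
  {x ∈ U | x 0 = c}.image Fin.tail

variable {U : Finset (Fin (n + 1) → ZMod q)} {c : ZMod q}

theorem cons_mem_of_mem_headFiber {x : Fin n → ZMod q} (hx : x ∈ headFiber U c) :
    Fin.cons c x ∈ U := by
  obtain ⟨y, hy, rfl⟩ := mem_image.1 hx
  rw [mem_filter] at hy
  rw [← hy.2, Fin.cons_self_tail]
  exact hy.1

theorem card_headFiber : #(headFiber U c) = #{x ∈ U | x 0 = c} := by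
  refine card_image_of_injOn fun x hx y hy hxy => ?_
  rw [← Fin.cons_self_tail x, ← Fin.cons_self_tail y, (mem_filter.1 hx).2, (mem_filter.1 hy).2]
  exact congrArg _ hxy

theorem exists_le_card_headFiber [NeZero q] {m : ℕ} (h : q * m ≤ #U) :
    ∃ c, m ≤ #(headFiber U c) := by
  obtain ⟨c, -, hc⟩ := exists_le_card_fiber_of_mul_le_card_of_maps_to
    (f := fun x : Fin (n + 1) → ZMod q => x 0) (fun _ _ => mem_univ _) univ_nonempty
    (by rwa [card_univ, ZMod.card])
  exact ⟨c, card_headFiber ▸ hc⟩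

theorem Shatters.image_cons {W : Finset (Fin n → ZMod q)} (h : Shatters t (headFiber U c) W) :
    Shatters t U (W.image (Fin.cons c)) := by
  intro S _
  obtain ⟨u, hu, huW⟩ := h {w ∈ W | Fin.cons c w ∈ S} (filter_subset _ _)
  refine ⟨Fin.cons c u, cons_mem_of_mem_headFiber hu, fun w hw => ?_⟩
  obtain ⟨v, hv, rfl⟩ := mem_image.1 hw
  rw [hammingAdj_cons_cons, ← huW v hv, mem_filter, and_iff_right hv]

theorem HasShatteredPair.of_headFiber (h : HasShatteredPair (headFiber U c)) :
    HasShatteredPair U := by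
  obtain ⟨W, hWU, hW, hsh⟩ := h
  refine ⟨W.image (Fin.cons c), image_subset_iff.2 fun w hw => cons_mem_of_mem_headFiber (hWU hw),
    ?_, hsh.image_cons⟩
  rwa [card_image_of_injective W (Fin.cons_right_injective (α := fun _ => ZMod q) c)]

end Hamming

section Plane

variable {q : ℕ} {U : Finset (Fin 2 → ZMod q)}

theorem hasShatteredPair_of_path {r₁ r₂ r₃ c₁ c₂ c₃ : ZMod q} (hr : r₁ ≠ r₂) (hc : c₁ ≠ c₂)
    (h₁ : ![r₁, c₁] ∈ U) (h₂ : ![r₁, c₂] ∈ U) (h₃ : ![r₂, c₂] ∈ U) (h : ![r₃, c₃] ∈ U)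
    (hr₁ : r₃ ≠ r₁) (hr₂ : r₃ ≠ r₂) (hc₁ : c₃ ≠ c₁) (hc₂ : c₃ ≠ c₂) : HasShatteredPair U :=
  ⟨{![r₁, c₁], ![r₂, c₂]}, insert_subset h₁ (singleton_subset_iff.2 h₃), card_pair (by simp [hr]),
    shatters_pair_s14 ⟨_, h₂, by simp [hammingAdj_two_iff]⟩
      ⟨_, h₃, by simp [hammingAdj_two_iff, hr.symm, hc.symm]⟩
      ⟨_, h₁, by simp [hammingAdj_two_iff, hr, hc]⟩ ⟨_, h, by simp [hammingAdj_two_iff, *]⟩⟩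

theorem hasShatteredPair_of_square_row {r r' s c₁ c₂ c₃ : ZMod q} (hr : r ≠ r') (hc : c₁ ≠ c₂)
    (h₁ : ![r, c₁] ∈ U) (h₂ : ![r, c₂] ∈ U) (h₃ : ![r', c₁] ∈ U) (h₄ : ![r', c₂] ∈ U)
    (h : ![s, c₃] ∈ U) (hs : s ≠ r) (hc₁ : c₃ ≠ c₁) (hc₂ : c₃ ≠ c₂) : HasShatteredPair U :=
  ⟨{![r, c₁], ![r, c₂]}, insert_subset h₁ (singleton_subset_iff.2 h₂), card_pair (by simp [hc]),
    shatters_pair_s14 ⟨_, h₁, by simp [hammingAdj_two_iff]⟩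
      ⟨_, h₄, by simp [hammingAdj_two_iff, hr.symm, hc.symm]⟩
      ⟨_, h₃, by simp [hammingAdj_two_iff, hr.symm, hc]⟩ ⟨_, h, by simp [hammingAdj_two_iff, *]⟩⟩

theorem hasShatteredPair_of_square_col {r₁ r₂ s c c' c₃ : ZMod q} (hr : r₁ ≠ r₂) (hc : c ≠ c')
    (h₁ : ![r₁, c] ∈ U) (h₂ : ![r₂, c] ∈ U) (h₃ : ![r₁, c'] ∈ U) (h₄ : ![r₂, c'] ∈ U)
    (h : ![s, c₃] ∈ U) (hc₃ : c₃ ≠ c) (hs₁ : s ≠ r₁) (hs₂ : s ≠ r₂) : HasShatteredPair U :=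
  ⟨{![r₁, c], ![r₂, c]}, insert_subset h₁ (singleton_subset_iff.2 h₂), card_pair (by simp [hr]),
    shatters_pair_s14 ⟨_, h₁, by simp [hammingAdj_two_iff]⟩
      ⟨_, h₄, by simp [hammingAdj_two_iff, hr.symm, hc.symm]⟩
      ⟨_, h₃, by simp [hammingAdj_two_iff, hr, hc.symm]⟩ ⟨_, h, by simp [hammingAdj_two_iff, *]⟩⟩

theorem hasShatteredPair_of_two_mul_le_card (hq : 3 ≤ q) (hU : 2 * q ≤ #U) :
    HasShatteredPair U := by
  have : NeZero q := ⟨by omega⟩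
  set E := U.map (finTwoArrowEquiv (ZMod q)).toEmbedding
  have hmem : ∀ e, e ∈ E ↔ ![e.1, e.2] ∈ U := fun _ => mem_map_equiv
  have hE : #E = #U := card_map _
  by_contra hU'
  have := card_lt_card_add_card_of_forall_meets (E := E) (by omega)
    (fun r₁ r₂ c₁ c₂ hr hc h₁ h₂ h₃ e he => by
      by_contra! h
      simp only [hmem] at h₁ h₂ h₃ he
      exact hU' (hasShatteredPair_of_path hr hc h₁ h₂ h₃ he h.1 h.2.1 h.2.2.1 h.2.2.2))
    (fun r r' c₁ c₂ hr hc h₁ h₂ h₃ h₄ e he => by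
      by_contra! h
      simp only [hmem] at h₁ h₂ h₃ h₄ he
      exact hU' (hasShatteredPair_of_square_row hr hc h₁ h₂ h₃ h₄ he h.1 h.2.1 h.2.2))
    (fun r₁ r₂ c c' hr hc h₁ h₂ h₃ h₄ e he => by
      by_contra! h
      simp only [hmem] at h₁ h₂ h₃ h₄ he
      exact hU' (hasShatteredPair_of_square_col hr hc h₁ h₂ h₃ h₄ he h.1 h.2.1 h.2.2))
  simp only [ZMod.card] at this
  omega

end Plane

/-- if `d ≥ 2`, `q ≥ 4` and `U ⊆ V(H(d,q,2))` has `|U| ≥ 2q^(d-1)`,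
then the VC-dimension of `(U, n(U))` is at least 2. -/
theorem vc_dim_ge_two_Hdq2 (d q : ℕ) (hd : 2 ≤ d) (hq : 4 ≤ q)
    (U : Finset (Fin d → ZMod q)) (hU : 2 * q ^ (d - 1) ≤ U.card) :
    ∃ W ⊆ U, W.card = 2 ∧ Shatters 2 U W := by
  have : NeZero q := ⟨by omega⟩
  induction d, hd using Nat.le_induction with
  | base => exact hasShatteredPair_of_two_mul_le_card (by omega) (by simpa using hU)
  | succ d hd ih =>
    have hU' : q * (2 * q ^ (d - 1)) ≤ #U := by
      rwa [mul_left_comm, ← pow_succ', Nat.sub_add_cancel (by omega)]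
    obtain ⟨c, hc⟩ := exists_le_card_headFiber hU'
    exact HasShatteredPair.of_headFiber (ih _ hc)
end
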